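/- Let (G,E) be a contracting self-similar groupoid action on a finite directed graph E, with nucleus N, and let q : E^{-∞} → J be the quotient map onto the limit space. If there exist g ∈ N and finite paths μ, ν ∈ E* with g·μ = ν, then q(Z(μ]) ∩ q(Z(ν]) is nonempty, where Z(μ] = { x ∈ E^{-∞} : x_{-|μ|}…x_{-1} = μ }. -/

import Mathlib

/-!
Self-similar groupoid actions on finite directed graphs, following
Brownlowe–Buss–Gonçalves–Hume–Sims–Whittaker,
"KK-duality for self-similar groupoid actions on graphs".

A directed graph is given by a vertex type `V`, an edge type `E` and
range/source maps `rE sE : E → V`.  A finite path is modelled as a list of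
edges together with a base vertex (its range): the list `[e₁, …, eₙ]` is the
path `e₁ … eₙ` read from left to right, so consecutive edges satisfy
`sE eᵢ = rE eᵢ₊₁`.  The groupoid of a self-similar action, its partial
multiplication, the action on finite paths and the restriction maps are
modelled as total functions whose values are only constrained (by the axioms
of the structure `SSA`) on their natural domains.
-/

universe u

namespace SSG

variable {V E : Type u}

/-- `l` is a trail: the source of each edge is the range of the next. -/
def IsTrail (rE sE : E → V) (l : List E) : Prop :=
  List.Chain' (fun e f => sE e = rE f) l

/-- `FromV rE sE v l` : `l` is a finite path whose range (leftmost vertex) is `v`. -/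
def FromV (rE sE : E → V) (v : V) (l : List E) : Prop :=
  IsTrail rE sE l ∧ ∀ e, l.head? = some e → rE e = v

/-- The source (rightmost vertex) of the finite path `l` with range `v`. -/
def trailSrc (sE : E → V) (v : V) (l : List E) : V :=
  l.getLast?.elim v sE

/-- A (faithful) self-similar groupoid action `(G, E)` on the directed graph with
vertices `V`, edges `E`, range map `rE` and source map `sE`.  Here `d`/`c` are
the domain/codomain maps of the groupoid `G` (its units are `unit v` for
`v : V`), `mul h g` is the composite `h ∘ g` (junk unless `d h = c g`),
`act g l` is `g · l` for finite paths `l` with range `d g` (junk otherwise)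
and `res g l` is the restriction `g|_l` (junk otherwise). -/
structure SSA (V E : Type u) (rE sE : E → V) : Type (u + 1) where
  G : Type u
  d : G → V
  c : G → V
  mul : G → G → G
  inv : G → G
  unit : V → G
  act : G → List E → List E
  res : G → List E → G
  d_unit : ∀ v, d (unit v) = v
  c_unit : ∀ v, c (unit v) = v
  d_mul : ∀ g h, d h = c g → d (mul h g) = d g
  c_mul : ∀ g h, d h = c g → c (mul h g) = c h
  mul_assoc : ∀ g h k, d h = c g → d k = c h → mul k (mul h g) = mul (mul k h) g
  unit_mul : ∀ g, mul (unit (c g)) g = g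
  mul_unit : ∀ g, mul g (unit (d g)) = g
  d_inv : ∀ g, d (inv g) = c g
  c_inv : ∀ g, c (inv g) = d g
  inv_mul : ∀ g, mul (inv g) g = unit (d g)
  mul_inv : ∀ g, mul g (inv g) = unit (c g)
  act_fromV : ∀ g l, FromV rE sE (d g) l → FromV rE sE (c g) (act g l)
  act_length : ∀ g l, FromV rE sE (d g) l → (act g l).length = l.length
  act_unit : ∀ v l, FromV rE sE v l → act (unit v) l = l
  act_mul : ∀ g h l, d h = c g → FromV rE sE (d g) l →
    act (mul h g) l = act h (act g l)
  faithful : ∀ g h, d g = d h → c g = c h →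
    (∀ l, FromV rE sE (d g) l → act g l = act h l) → g = h
  res_nil : ∀ g, res g [] = g
  d_res : ∀ g l, FromV rE sE (d g) l → d (res g l) = trailSrc sE (d g) l
  c_res : ∀ g l, FromV rE sE (d g) l → c (res g l) = trailSrc sE (c g) (act g l)
  res_append : ∀ g l m, FromV rE sE (d g) l →
    FromV rE sE (trailSrc sE (d g) l) m → res g (l ++ m) = res (res g l) m
  act_append : ∀ g l m, FromV rE sE (d g) l →
    FromV rE sE (trailSrc sE (d g) l) m →
    act g (l ++ m) = act g l ++ act (res g l) m

variable {rE sE : E → V}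

/-- `F` is a contracting core for the self-similar groupoid action `A`. -/
def SSA.IsCore (A : SSA V E rE sE) (F : Set A.G) : Prop :=
  F.Finite ∧ ∀ g : A.G, ∃ n : ℕ, ∀ l : List E,
    FromV rE sE (A.d g) l → l.length = n → A.res g l ∈ F

/-- The action is contracting if it admits a contracting core. -/
def SSA.Contracting (A : SSA V E rE sE) : Prop :=
  ∃ F : Set A.G, A.IsCore F

/-- The nucleus: the intersection of all contracting cores. -/
def SSA.nucleus (A : SSA V E rE sE) : Set A.G :=
  ⋂₀ {F : Set A.G | A.IsCore F}

/-- The action is recurrent. -/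
def SSA.Recurrent (A : SSA V E rE sE) : Prop :=
  ∀ e f : E, ∀ h : A.G, A.d h = sE e → A.c h = sE f →
    ∃ g : A.G, A.d g = rE e ∧ A.act g [e] = [f] ∧ A.res g [e] = h

/-- The action is level-transitive: any two paths of the same length lie in
one orbit. -/
def SSA.LevelTransitive (A : SSA V E rE sE) : Prop :=
  ∀ (v w : V) (l m : List E), FromV rE sE v l → FromV rE sE w m →
    l.length = m.length → ∃ g : A.G, A.d g = v ∧ A.c g = w ∧ A.act g l = m

/-- Every element of the groupoid is a finite composable product of
elements of `H`. -/
def SSA.GeneratedBy (A : SSA V E rE sE) (H : Set A.G) : Prop :=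
  ∀ g : A.G, ∃ (h : A.G) (t : List A.G), h ∈ H ∧ (∀ k ∈ t, k ∈ H) ∧
    List.Chain' (fun a b => A.d a = A.c b) (h :: t) ∧ t.foldl A.mul h = g

/-- The groupoid of the action is finitely generated. -/
def SSA.FinitelyGenerated (A : SSA V E rE sE) : Prop :=
  ∃ H : Set A.G, H.Finite ∧ A.GeneratedBy H

/-- The graph has no sources: every vertex receives an edge. -/
def NoSources (rE : E → V) : Prop := ∀ v : V, ∃ e : E, rE e = v

/-- The graph has no sinks: every vertex emits an edge. -/
def NoSinks (sE : E → V) : Prop := ∀ v : V, ∃ e : E, sE e = v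

/-- The graph is strongly connected: it has an edge, and any ordered pair of
vertices is joined by a finite path. -/
def StronglyConnected (rE sE : E → V) : Prop :=
  Nonempty E ∧ ∀ v w : V, ∃ l : List E, FromV rE sE v l ∧ trailSrc sE v l = w

/-- Right-infinite paths `y₁ y₂ y₃ …` (here `y k` is the edge `y_{k+1}`). -/
def RightPath (rE sE : E → V) : Type u :=
  {y : ℕ → E // ∀ k, sE (y k) = rE (y (k + 1))}

/-- The initial segment `y₁ … yₙ` of a right-infinite path. -/
def RightPath.trunc (y : RightPath rE sE) (n : ℕ) : List E :=
  (List.range n).map y.1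

/-- The action is regular: whenever `g` fixes a right-infinite path `y`
(equivalently, all its initial segments), `g` acts trivially on some cylinder
neighbourhood of `y`: some initial segment `μ` of `y` satisfies `g·μ = μ` and
`g|_μ = s(μ)`. -/
def SSA.Regular (A : SSA V E rE sE) : Prop :=
  ∀ (g : A.G) (y : RightPath rE sE), A.d g = rE (y.1 0) →
    (∀ n : ℕ, A.act g (y.trunc n) = y.trunc n) →
    ∃ n : ℕ, A.act g (y.trunc n) = y.trunc n ∧
      A.res g (y.trunc n) = A.unit (trailSrc sE (A.d g) (y.trunc n))

/-- Left-infinite paths `… x₋₂ x₋₁` (here `x k` is the edge `x_{-(k+1)}`). -/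
def LeftPath (rE sE : E → V) : Type u :=
  {x : ℕ → E // ∀ k, sE (x (k + 1)) = rE (x k)}

instance [TopologicalSpace E] : TopologicalSpace (LeftPath rE sE) :=
  inferInstanceAs (TopologicalSpace {x : ℕ → E // ∀ k, sE (x (k + 1)) = rE (x k)})

/-- The finite path `x₋ₘ … x₋₁`. -/
def LeftPath.trunc (x : LeftPath rE sE) (m : ℕ) : List E :=
  ((List.range m).reverse).map x.1

/-- The shift on left-infinite paths, deleting the rightmost edge. -/
def LeftPath.shift (x : LeftPath rE sE) : LeftPath rE sE :=
  ⟨fun k => x.1 (k + 1), fun k => x.2 (k + 1)⟩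

/-- Asymptotic equivalence of left-infinite paths: some sequence `(gₙ)` in the
groupoid with finitely many distinct values satisfies
`gₙ · (xₙ … x₋₁) = yₙ … y₋₁` for all `n < 0`. -/
def SSA.AsympEq (A : SSA V E rE sE) (x y : LeftPath rE sE) : Prop :=
  ∃ g : ℕ → A.G, (Set.range g).Finite ∧
    (∀ m : ℕ, A.d (g m) = rE (x.1 m)) ∧
    (∀ m : ℕ, A.act (g m) (x.trunc (m + 1)) = y.trunc (m + 1))

/-- The cylinder set `Z(l]` of left-infinite paths ending in `l`. -/
def cylL (rE sE : E → V) (l : List E) : Set (LeftPath rE sE) :=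
  {x : LeftPath rE sE | x.trunc l.length = l}

/-- The basic subset `U_l` of the limit space attached to a finite path `l`
with range `v`. -/
def SSA.limitU (A : SSA V E rE sE) (v : V) (l : List E) :
    Set (Quot A.AsympEq) :=
  {z : Quot A.AsympEq | ∀ x : LeftPath rE sE, Quot.mk A.AsympEq x = z →
    ∃ g ∈ A.nucleus, A.d g = v ∧ x ∈ cylL rE sE (A.act g l)}

/-- Bi-infinite paths `… x₋₁ x₀ x₁ …`. -/
def BiPath (rE sE : E → V) : Type u :=
  {x : ℤ → E // ∀ k : ℤ, sE (x k) = rE (x (k + 1))}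

instance [TopologicalSpace E] : TopologicalSpace (BiPath rE sE) :=
  inferInstanceAs (TopologicalSpace {x : ℤ → E // ∀ k : ℤ, sE (x k) = rE (x (k + 1))})

/-- The finite segment `xₙ x_{n+1} … x_{n+m-1}` of a bi-infinite path. -/
def BiPath.seg (x : BiPath rE sE) (n : ℤ) (m : ℕ) : List E :=
  (List.range m).map fun i => x.1 (n + i)

/-- Asymptotic equivalence of bi-infinite paths: some sequence `(gₙ)_{n ∈ ℤ}`
with finitely many distinct values satisfies
`gₙ · (xₙ x_{n+1} …) = yₙ y_{n+1} …` for all `n`. -/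
def SSA.AsympEqZ (A : SSA V E rE sE) (x y : BiPath rE sE) : Prop :=
  ∃ g : ℤ → A.G, (Set.range g).Finite ∧
    (∀ n : ℤ, A.d (g n) = rE (x.1 n)) ∧
    (∀ (n : ℤ) (m : ℕ), A.act (g n) (x.seg n m) = y.seg n m)

/-- The left-infinite path `x(-∞, n) = … x_{n-1} xₙ` of a bi-infinite path. -/
def BiPath.tail (x : BiPath rE sE) (n : ℤ) : LeftPath rE sE :=
  ⟨fun k => x.1 (n - k), by
    intro k
    have h := x.2 (n - ((k : ℤ) + 1))
    have h2 : n - ((k : ℤ) + 1) + 1 = n - (k : ℤ) := by ring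
    have h3 : (n - ((k + 1 : ℕ) : ℤ)) = n - ((k : ℤ) + 1) := by push_cast; ring
    show sE (x.1 (n - ((k + 1 : ℕ) : ℤ))) = rE (x.1 (n - (k : ℤ)))
    rw [h3, ← h2]
    exact h⟩

/-- The translation `τ` on bi-infinite paths, `(τ x)ₙ = x_{n-1}`. -/
def BiPath.translate (x : BiPath rE sE) : BiPath rE sE :=
  ⟨fun m => x.1 (m - 1), by
    intro k
    have h := x.2 (k - 1)
    have h2 : (k - 1 + 1 : ℤ) = k + 1 - 1 := by ring
    rw [h2] at h
    exact h⟩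

/-- The shift homeomorphism `σ̃_∞` on the inverse limit `lim← (J, T)`. -/
def solShift {J : Type*} (T : J → J)
    (z : {z : ℕ → J // ∀ n, T (z (n + 1)) = z n}) :
    {z : ℕ → J // ∀ n, T (z (n + 1)) = z n} :=
  ⟨fun n => match n with
    | 0 => T (z.1 0)
    | m + 1 => z.1 m,
   fun n => match n with
    | 0 => rfl
    | m + 1 => z.2 m⟩

/-- The distance function of a bundled metric space. -/
def mdist {Y : Type*} (m : MetricSpace Y) (a b : Y) : ℝ := by
  letI := m; exact dist a b

/-- The open ball of a bundled metric space. -/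
def mball {Y : Type*} (m : MetricSpace Y) (a : Y) (r : ℝ) : Set Y := by
  letI := m; exact Metric.ball a r

/-- The topology induced by a bundled metric space. -/
def mtop {Y : Type*} (m : MetricSpace Y) : TopologicalSpace Y := by
  letI := m; exact inferInstance

/-!
Close a contracting core under restriction and keep only its *persistent* elements, those
that are restrictions of core elements by paths of every length. Non-persistent elements have
bounded depth, so this is again a core and contains the nucleus element `g`; moreover every
persistent element is a one-edge restriction of another one. Iterating backwards gives
`g = g₀` and a left-infinite path `… e₁ e₀` with `g_{k+1}|_{e_k} = g_k`, the `g_k` taking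
finitely many values. Then `g_k · (e_{k-1} ⋯ e₀ μ) = (g_k · e_{k-1}) ⋯ (g₁ · e₀) ν`, so
`… e₁ e₀ μ ∈ Z(μ]` and `… (g₂ · e₁)(g₁ · e₀) ν ∈ Z(ν]` are asymptotically equivalent.
-/

lemma fromV_nil (v : V) : FromV rE sE v ([] : List E) :=
  ⟨List.isChain_nil, by simp⟩

lemma fromV_cons {v : V} {a : E} {l : List E} :
    FromV rE sE v (a :: l) ↔ rE a = v ∧ FromV rE sE (sE a) l := by
  show (List.IsChain _ (a :: l) ∧ _) ↔ rE a = v ∧ List.IsChain _ l ∧ _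
  rw [List.isChain_cons]
  constructor
  · rintro ⟨⟨hnext, hl⟩, hhead⟩
    exact ⟨hhead a rfl, hl, fun e he => (hnext e he).symm⟩
  · rintro ⟨ha, hl, hhead⟩
    exact ⟨⟨fun b hb => (hhead b hb).symm, hl⟩, fun e he => by cases he; exact ha⟩

lemma fromV_singleton {v : V} {e : E} : FromV rE sE v [e] ↔ rE e = v := by
  simp [fromV_cons, fromV_nil]

lemma trailSrc_singleton (v : V) (e : E) : trailSrc sE v [e] = sE e := rfl

lemma trailSrc_cons (v : V) (a : E) (l : List E) :
    trailSrc sE v (a :: l) = trailSrc sE (sE a) l := by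
  cases l with
  | nil => rfl
  | cons b m => simp [trailSrc, List.getLast?_cons]

lemma fromV_append {v : V} {l m : List E} :
    FromV rE sE v (l ++ m) ↔ FromV rE sE v l ∧ FromV rE sE (trailSrc sE v l) m := by
  induction l generalizing v with
  | nil => exact (and_iff_right (fromV_nil v)).symm
  | cons a l ih => rw [List.cons_append, fromV_cons, ih, fromV_cons, trailSrc_cons, and_assoc]

namespace LeftPath

lemma trunc_succ (x : LeftPath rE sE) (n : ℕ) : x.trunc (n + 1) = x.1 n :: x.trunc n := by
  simp [trunc, List.range_succ]

lemma length_trunc (x : LeftPath rE sE) (n : ℕ) : (x.trunc n).length = n := by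
  simp [trunc]

lemma drop_trunc (x : LeftPath rE sE) (N n : ℕ) : (x.trunc (N + n)).drop N = x.trunc n := by
  induction N with
  | zero => simp
  | succ N ih => rw [Nat.add_right_comm, trunc_succ, List.drop_succ_cons, ih]

lemma trunc_add (x : LeftPath rE sE) (N n : ℕ) :
    x.trunc (N + n) = (x.trunc (N + n)).take N ++ x.trunc n := by
  conv_lhs => rw [← List.take_append_drop N (x.trunc (N + n)), drop_trunc]

/-- `z a`: the edge `a` added at the right end of `z`. -/
def concat (z : LeftPath rE sE) (a : E) (h : sE (z.1 0) = rE a) : LeftPath rE sE :=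
  ⟨fun m => Nat.casesOn m a z.1, fun k => by cases k with
    | zero => exact h
    | succ j => exact z.2 j⟩

lemma trunc_concat (z : LeftPath rE sE) (a : E) (h : sE (z.1 0) = rE a) (k : ℕ) :
    (z.concat a h).trunc (k + 1) = z.trunc k ++ [a] := by
  induction k with
  | zero => rfl
  | succ j ih => rw [trunc_succ, ih, trunc_succ]; rfl

/-- `z l`: the finite path `l` added at the right end of `z`. -/
def append (z : LeftPath rE sE) : (l : List E) → FromV rE sE (sE (z.1 0)) l → LeftPath rE sE
  | [], _ => z
  | a :: l, h => (z.concat a (fromV_cons.mp h).1.symm).append l (fromV_cons.mp h).2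

lemma trunc_append (z : LeftPath rE sE) (l : List E) (h : FromV rE sE (sE (z.1 0)) l) (k : ℕ) :
    (z.append l h).trunc (l.length + k) = z.trunc k ++ l := by
  induction l generalizing z k with
  | nil => simp [append]
  | cons a l ih =>
    rw [List.length_cons, Nat.add_right_comm, Nat.add_assoc]
    exact (ih _ _ (k + 1)).trans (by rw [trunc_concat, List.append_assoc]; rfl)

lemma append_mem_cylL (z : LeftPath rE sE) (l : List E) (h : FromV rE sE (sE (z.1 0)) l) :
    z.append l h ∈ cylL rE sE l :=
  (z.trunc_append l h 0).trans (List.nil_append l)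

end LeftPath

namespace SSA

variable (A : SSA V E rE sE)

lemma fromV_res_of_append {g : A.G} {l m : List E} (h : FromV rE sE (A.d g) (l ++ m)) :
    FromV rE sE (A.d (A.res g l)) m := by
  rw [A.d_res g l (fromV_append.mp h).1]
  exact (fromV_append.mp h).2

lemma res_append_of_fromV {g : A.G} {l m : List E} (h : FromV rE sE (A.d g) (l ++ m)) :
    A.res g (l ++ m) = A.res (A.res g l) m :=
  A.res_append g l m (fromV_append.mp h).1 (fromV_append.mp h).2

lemma act_res_eq_drop {g : A.G} {l m : List E} (h : FromV rE sE (A.d g) (l ++ m)) :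
    A.act (A.res g l) m = (A.act g (l ++ m)).drop l.length := by
  rw [A.act_append g l m (fromV_append.mp h).1 (fromV_append.mp h).2,
    List.drop_left' (A.act_length g l (fromV_append.mp h).1)]

lemma d_res_singleton {g : A.G} {e : E} (he : rE e = A.d g) : A.d (A.res g [e]) = sE e :=
  A.d_res g [e] (fromV_singleton.mpr he)

lemma exists_act_singleton {g : A.G} {e : E} (he : rE e = A.d g) :
    ∃ f : E, A.act g [e] = [f] ∧ rE f = A.c g ∧ sE f = A.c (A.res g [e]) := by
  have hfv : FromV rE sE (A.d g) [e] := fromV_singleton.mpr he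
  obtain ⟨f, hf⟩ := List.length_eq_one_iff.mp (A.act_length g [e] hfv)
  have hfc := A.act_fromV g [e] hfv
  rw [hf] at hfc
  refine ⟨f, hf, fromV_singleton.mp hfc, ?_⟩
  rw [A.c_res g [e] hfv, hf, trailSrc_singleton]

def resClosure (F : Set A.G) : Set A.G :=
  {h | ∃ f ∈ F, ∃ l, FromV rE sE (A.d f) l ∧ A.res f l = h}

variable {A}

lemma subset_resClosure (F : Set A.G) : F ⊆ A.resClosure F :=
  fun f hf => ⟨f, hf, [], fromV_nil _, A.res_nil f⟩

lemma res_mem_resClosure {F : Set A.G} {h : A.G} {l : List E} (hh : h ∈ A.resClosure F)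
    (hl : FromV rE sE (A.d h) l) : A.res h l ∈ A.resClosure F := by
  obtain ⟨f, hf, p, hp, rfl⟩ := hh
  rw [A.d_res f p hp] at hl
  exact ⟨f, hf, p ++ l, fromV_append.mpr ⟨hp, hl⟩, A.res_append f p l hp hl⟩

/-- Strip off one edge `e` and then `n (f|_e) ≤ N` more edges, which lands back in `F`. -/
lemma exists_short_res {F : Set A.G} {n : A.G → ℕ} {N : ℕ}
    (hn : ∀ g l, FromV rE sE (A.d g) l → l.length = n g → A.res g l ∈ F)
    (hN : ∀ f ∈ F, ∀ e : E, n (A.res f [e]) ≤ N) {f : A.G} (hf : f ∈ F) (l : List E)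
    (hl : FromV rE sE (A.d f) l) :
    ∃ f' ∈ F, ∃ l', FromV rE sE (A.d f') l' ∧ l'.length ≤ N + 1 ∧
      A.res f' l' = A.res f l := by
  induction hlen : l.length using Nat.strong_induction_on generalizing f l with
  | _ m ih =>
    by_cases hshort : m ≤ N + 1
    · exact ⟨f, hf, l, hl, hlen ▸ hshort, rfl⟩
    obtain _ | ⟨e, l₁⟩ := l
    · simp at hlen; omega
    set k := n (A.res f [e])
    have hk : k < l₁.length := by
      have := hN f hf e
      simp only [List.length_cons] at hlen
      omega
    have hsplit : e :: l₁ = [e] ++ (l₁.take k ++ l₁.drop k) := by simp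
    rw [hsplit] at hl ⊢
    have hl₁ := A.fromV_res_of_append hl
    have hf₁ : A.res (A.res f [e]) (l₁.take k) ∈ F :=
      hn _ _ (fromV_append.mp hl₁).1 (by simp; omega)
    obtain ⟨f', hf', l', hl', hlen', hres⟩ :=
      ih _ (by simp at hlen ⊢; omega) hf₁ (l₁.drop k) (A.fromV_res_of_append hl₁) rfl
    refine ⟨f', hf', l', hl', hlen', ?_⟩
    rw [hres, A.res_append_of_fromV hl, A.res_append_of_fromV hl₁]

lemma IsCore.resClosure_finite [Finite E] {F : Set A.G} (hF : A.IsCore F) :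
    (A.resClosure F).Finite := by
  choose n hn using hF.2
  obtain ⟨N, hN⟩ := ((hF.1.prod (Set.finite_univ (α := E))).image
    fun p : A.G × E => n (A.res p.1 [p.2])).bddAbove
  have hsub : A.resClosure F ⊆ (fun p : A.G × List E => A.res p.1 p.2) ''
      (F ×ˢ {l : List E | l.length ≤ N + 1}) := by
    rintro _ ⟨f, hf, l, hl, rfl⟩
    obtain ⟨f', hf', l', -, hlen, hres⟩ :=
      A.exists_short_res hn (fun f hf e => hN ⟨(f, e), ⟨hf, trivial⟩, rfl⟩) hf l hl
    exact ⟨(f', l'), ⟨hf', hlen⟩, hres⟩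
  exact ((hF.1.prod (List.finite_length_le E (N + 1))).image _).subset hsub

lemma IsCore.resClosure [Finite E] {F : Set A.G} (hF : A.IsCore F) :
    A.IsCore (A.resClosure F) := by
  refine ⟨hF.resClosure_finite, fun g => ?_⟩
  obtain ⟨n, hn⟩ := hF.2 g
  exact ⟨n, fun l hl hlen => subset_resClosure F (hn l hl hlen)⟩

variable (A) in
def IsResClosed (S : Set A.G) : Prop :=
  ∀ h ∈ S, ∀ l, FromV rE sE (A.d h) l → A.res h l ∈ S

variable (A) in
def IsResOfDepth (S : Set A.G) (n : ℕ) (h : A.G) : Prop :=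
  ∃ f ∈ S, ∃ l, FromV rE sE (A.d f) l ∧ l.length = n ∧ A.res f l = h

variable (A) in
def persistent (S : Set A.G) : Set A.G :=
  {h | ∀ n, A.IsResOfDepth S n h}

lemma isResClosed_resClosure (F : Set A.G) : A.IsResClosed (A.resClosure F) :=
  fun _ hh _ hl => res_mem_resClosure hh hl

lemma IsResOfDepth.mem {S : Set A.G} (hS : A.IsResClosed S) {n : ℕ} {h : A.G}
    (hh : A.IsResOfDepth S n h) : h ∈ S := by
  obtain ⟨f, hf, l, hl, -, rfl⟩ := hh
  exact hS f hf l hl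

lemma IsResOfDepth.mono {S : Set A.G} (hS : A.IsResClosed S) {m n : ℕ} {h : A.G}
    (hh : A.IsResOfDepth S n h) (hmn : m ≤ n) : A.IsResOfDepth S m h := by
  obtain ⟨f, hf, l, hl, rfl, rfl⟩ := hh
  rw [← List.take_append_drop (l.length - m) l] at hl ⊢
  exact ⟨_, hS f hf _ (fromV_append.mp hl).1, _, A.fromV_res_of_append hl, by simp; omega,
    (A.res_append_of_fromV hl).symm⟩

lemma isResOfDepth_res {S : Set A.G} {g : A.G} {n₀ n : ℕ}
    (hn₀ : ∀ l, FromV rE sE (A.d g) l → l.length = n₀ → A.res g l ∈ S) {l : List E}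
    (hl : FromV rE sE (A.d g) l) (hlen : l.length = n₀ + n) : A.IsResOfDepth S n (A.res g l) := by
  rw [← List.take_append_drop n₀ l] at hl ⊢
  exact ⟨_, hn₀ _ (fromV_append.mp hl).1 (by simp; omega), _, A.fromV_res_of_append hl,
    by simp; omega, (A.res_append_of_fromV hl).symm⟩

lemma exists_isResOfDepth_imp_mem_persistent {S : Set A.G} (hfin : S.Finite)
    (hS : A.IsResClosed S) : ∃ D, ∀ h, A.IsResOfDepth S D h → h ∈ A.persistent S := by
  have hbound :
      ∀ᶠ D in Filter.atTop, ∀ h ∈ S, h ∉ A.persistent S → ¬ A.IsResOfDepth S D h := by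
    refine (Filter.eventually_all_finite hfin).mpr fun h _ => ?_
    by_cases hp : h ∈ A.persistent S
    · exact Filter.Eventually.of_forall fun _ hnp => absurd hp hnp
    obtain ⟨n, hn⟩ := not_forall.mp hp
    exact Filter.eventually_atTop.mpr ⟨n, fun D hD _ hdeep => hn (hdeep.mono hS hD)⟩
  obtain ⟨D, hD⟩ := hbound.exists
  exact ⟨D, fun h hh => by_contra fun hnp => hD h (hh.mem hS) hnp hh⟩

lemma IsCore.persistent {S : Set A.G} (hcore : A.IsCore S) (hS : A.IsResClosed S) :
    A.IsCore (A.persistent S) := by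
  obtain ⟨D, hD⟩ := exists_isResOfDepth_imp_mem_persistent hcore.1 hS
  refine ⟨hcore.1.subset fun h hh => (hh 0).mem hS, fun g => ?_⟩
  obtain ⟨n₀, hn₀⟩ := hcore.2 g
  exact ⟨n₀ + D, fun l hl hlen => hD _ (isResOfDepth_res hn₀ hl hlen)⟩

lemma exists_res_singleton_eq_of_mem_persistent {S : Set A.G} (hfin : S.Finite)
    (hS : A.IsResClosed S) {h : A.G} (hh : h ∈ A.persistent S) :
    ∃ p ∈ A.persistent S, ∃ e : E, rE e = A.d p ∧ A.res p [e] = h := by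
  obtain ⟨D, hD⟩ := exists_isResOfDepth_imp_mem_persistent hfin hS
  obtain ⟨f, hf, l, hl, hlen, rfl⟩ := hh (D + 1)
  obtain ⟨l', e, rfl⟩ := (List.eq_nil_or_concat' l).resolve_left (by rintro rfl; simp at hlen)
  exact ⟨A.res f l', hD _ ⟨f, hf, l', (fromV_append.mp hl).1, by simpa using hlen, rfl⟩, e,
    fromV_singleton.mp (A.fromV_res_of_append hl), (A.res_append_of_fromV hl).symm⟩

/-- The restrictions `g|_p` of `g ∈ F` by the paths `p` of a fixed length `N` take finitely
many values; with them, `g · (p μ) = p' μ'` becomes `g|_p · μ = μ'`. -/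
lemma asympEq_of_act_trunc [Finite E] {x y : LeftPath rE sE} {F : Set A.G} (hF : F.Finite)
    (N : ℕ) (hxy : ∀ n, ∃ g ∈ F, FromV rE sE (A.d g) (x.trunc (N + n)) ∧
      A.act g (x.trunc (N + n)) = y.trunc (N + n)) :
    A.AsympEq x y := by
  choose g hgF hgx hgy using hxy
  let p : ℕ → List E := fun m => (x.trunc (N + (m + 1))).take N
  have hp : ∀ m, FromV rE sE (A.d (g (m + 1))) (p m ++ x.trunc (m + 1)) := fun m =>
    x.trunc_add N (m + 1) ▸ hgx (m + 1)
  have hplen : ∀ m, (p m).length = N := fun m => by simp [p, LeftPath.length_trunc]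
  refine ⟨fun m => A.res (g (m + 1)) (p m), ?_, fun m => ?_, fun m => ?_⟩
  · refine ((hF.prod (List.finite_length_eq E N)).image
      fun q : A.G × List E => A.res q.1 q.2).subset ?_
    rintro _ ⟨m, rfl⟩
    exact ⟨(g (m + 1), p m), ⟨hgF _, hplen m⟩, rfl⟩
  · have h := A.fromV_res_of_append (hp m)
    rw [LeftPath.trunc_succ] at h
    exact (fromV_cons.mp h).1.symm
  · rw [A.act_res_eq_drop (hp m), ← x.trunc_add, hgy, hplen, LeftPath.drop_trunc]

variable (A) in
def IsRestrictionChain (h : ℕ → A.G) (z : LeftPath rE sE) : Prop :=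
  ∀ k, rE (z.1 k) = A.d (h (k + 1)) ∧ A.res (h (k + 1)) [z.1 k] = h k

lemma exists_isRestrictionChain {P : Set A.G}
    (hP : ∀ h ∈ P, ∃ p ∈ P, ∃ e : E, rE e = A.d p ∧ A.res p [e] = h) {g : A.G}
    (hg : g ∈ P) :
    ∃ (h : ℕ → A.G) (z : LeftPath rE sE), (∀ k, h k ∈ P) ∧ h 0 = g ∧
      A.IsRestrictionChain h z := by
  have hstep : ∀ h : P, ∃ q : P × E, rE q.2 = A.d q.1 ∧ A.res q.1 [q.2] = h := fun h =>
    let ⟨p, hp, e, he⟩ := hP h h.2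
    ⟨(⟨p, hp⟩, e), he⟩
  choose step hstep using hstep
  let seq : ℕ → P := fun k => (fun q => (step q).1)^[k] ⟨g, hg⟩
  have hseq : ∀ k, seq (k + 1) = (step (seq k)).1 := fun k =>
    Function.iterate_succ_apply' _ k _
  have hchain : ∀ k, rE (step (seq k)).2 = A.d (seq (k + 1)) ∧
      A.res (seq (k + 1)) [(step (seq k)).2] = seq k := fun k =>
    hseq k ▸ hstep (seq k)
  refine ⟨fun k => seq k, ⟨fun k => (step (seq k)).2, fun k => ?_⟩, fun k => (seq k).2, rfl,
    hchain⟩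
  rw [← A.d_res_singleton (hchain (k + 1)).1, (hchain (k + 1)).2]
  exact (hchain k).1.symm

lemma IsRestrictionChain.d_eq {h : ℕ → A.G} {z : LeftPath rE sE}
    (hz : A.IsRestrictionChain h z) (k : ℕ) : A.d (h k) = sE (z.1 k) := by
  rw [← (hz k).2, A.d_res_singleton (hz k).1]

lemma IsRestrictionChain.exists_image {h : ℕ → A.G} {z : LeftPath rE sE}
    (hz : A.IsRestrictionChain h z) :
    ∃ z' : LeftPath rE sE,
      ∀ k, A.act (h (k + 1)) [z.1 k] = [z'.1 k] ∧ sE (z'.1 k) = A.c (h k) := by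
  choose f hf hfr hfs using fun k => A.exists_act_singleton (hz k).1
  simp only [(hz _).2] at hfs
  exact ⟨⟨f, fun k => (hfs (k + 1)).trans (hfr k).symm⟩, fun k => ⟨hf k, hfs k⟩⟩

lemma IsRestrictionChain.act_trunc_append {h : ℕ → A.G} {z z' : LeftPath rE sE}
    (hz : A.IsRestrictionChain h z) (hz' : ∀ k, A.act (h (k + 1)) [z.1 k] = [z'.1 k])
    {μ : List E} (hμ : FromV rE sE (A.d (h 0)) μ) (k : ℕ) :
    FromV rE sE (A.d (h k)) (z.trunc k ++ μ) ∧
      A.act (h k) (z.trunc k ++ μ) = z'.trunc k ++ A.act (h 0) μ := by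
  induction k with
  | zero => exact ⟨hμ, rfl⟩
  | succ k ih =>
    have hfv : FromV rE sE (A.d (h (k + 1))) ([z.1 k] ++ (z.trunc k ++ μ)) :=
      fromV_cons.mpr ⟨(hz k).1, hz.d_eq k ▸ ih.1⟩
    rw [LeftPath.trunc_succ, LeftPath.trunc_succ, List.cons_append]
    refine ⟨hfv, ?_⟩
    rw [← List.singleton_append,
      A.act_append _ _ _ (fromV_append.mp hfv).1 (fromV_append.mp hfv).2, hz', (hz k).2, ih.2]
    rfl

lemma exists_isRestrictionChain_of_mem_nucleus [Finite E] (hA : A.Contracting) {g : A.G}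
    (hg : g ∈ A.nucleus) :
    ∃ (h : ℕ → A.G) (z : LeftPath rE sE), (Set.range h).Finite ∧ h 0 = g ∧
      A.IsRestrictionChain h z := by
  obtain ⟨F, hF⟩ := hA
  have hS := isResClosed_resClosure F
  have hfin := hF.resClosure_finite
  obtain ⟨h, z, hP, h0, hz⟩ := exists_isRestrictionChain
    (fun _ hh => exists_res_singleton_eq_of_mem_persistent hfin hS hh)
    (Set.mem_sInter.mp hg _ (hF.resClosure.persistent hS))
  refine ⟨h, z, hfin.subset ?_, h0, hz⟩
  rintro _ ⟨k, rfl⟩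
  exact (hP k 0).mem hS

end SSA

theorem cylinder_images_intersect_general
    [Fintype E] (rE sE : E → V) (A : SSA V E rE sE)
    (hA : A.Contracting) (g : A.G) (hg : g ∈ A.nucleus)
    (μ ν : List E) (hμ : FromV rE sE (A.d g) μ) (hν : A.act g μ = ν) :
    ∃ x y : LeftPath rE sE, x ∈ cylL rE sE μ ∧ y ∈ cylL rE sE ν ∧
      Quot.mk A.AsympEq x = Quot.mk A.AsympEq y := by
  obtain ⟨h, z, hfin, rfl, hz⟩ := A.exists_isRestrictionChain_of_mem_nucleus hA hg
  obtain ⟨z', hz'⟩ := hz.exists_image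
  subst hν
  have hact := hz.act_trunc_append (fun k => (hz' k).1) hμ
  have hν : FromV rE sE (sE (z'.1 0)) (A.act (h 0) μ) := (hz' 0).2 ▸ A.act_fromV _ μ hμ
  refine ⟨z.append μ (hz.d_eq 0 ▸ hμ), z'.append _ hν, z.append_mem_cylL _ _,
    z'.append_mem_cylL _ _, Quot.sound (SSA.asympEq_of_act_trunc hfin μ.length fun n =>
      ⟨h n, ⟨n, rfl⟩, ?_⟩)⟩
  rw [LeftPath.trunc_append, ← A.act_length _ μ hμ, LeftPath.trunc_append]
  exact hact n

/-- if a nucleus element maps `μ` to `ν`, then the images in the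
limit space of the cylinders `Z(μ]` and `Z(ν]` intersect. -/
theorem cylinder_images_intersect
    [Fintype V] [Fintype E] (rE sE : E → V) (A : SSA V E rE sE)
    (hA : A.Contracting) (g : A.G) (hg : g ∈ A.nucleus)
    (μ ν : List E) (hμ : FromV rE sE (A.d g) μ) (hν : A.act g μ = ν) :
    ∃ x y : LeftPath rE sE, x ∈ cylL rE sE μ ∧ y ∈ cylL rE sE ν ∧
      Quot.mk A.AsympEq x = Quot.mk A.AsympEq y :=
  cylinder_images_intersect_general rE sE A hA g hg μ ν hμ hν

end SSG
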